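/- arXiv:1411.7890 — 3 statements merged into one kernel-verified Lean document; each statement's English description precedes it below -/
import Mathlib

section
/- The map φ which assigns to each monomial u = x_1^{a_1}⋯x_n^{a_n} ∈ Mon(S∖I) the monomial prime ideal φ(u) = (x_{1,a_1+1}, …, x_{n,a_n+1}) ⊂ S^℘ is well defined (i.e., a_i + 1 ≤ b_i for all i) and establishes a bijection between Mon(S∖I) and the set Min(I^℘) of minimal prime ideals of I^℘. -/
open MvPolynomial

noncomputable section

/-- The vertex set / variable set `𝒮` of the polarized ring `S^℘`: pairs `⟨i, j⟩` with
`1 ≤ i ≤ n`, `1 ≤ j ≤ b i`.  Here `j : Fin (b i)` encodes the paper's second index `j + 1`,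
so the vertex `⟨i, j⟩` stands for the variable `x_{i, j+1}` of the paper. -/
abbrev PolVars (m : ℕ) (b : Fin m → ℕ) := Σ i : Fin m, Fin (b i)

/-- `I` is a monomial ideal, i.e. generated by monomials. -/
def IsMonomialIdeal {K : Type} [Field K] {m : ℕ} (I : Ideal (MvPolynomial (Fin m) K)) : Prop :=
  ∃ A : Set (Fin m →₀ ℕ), I = Ideal.span ((fun c => (monomial c (1 : K))) '' A)

/-- The exponent vectors of the minimal monomial generators of a monomial ideal:
the exponent vectors of monomials of `I` that are minimal under divisibility. -/
def MinGens (K : Type) [Field K] {m : ℕ} (I : Ideal (MvPolynomial (Fin m) K)) :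
    Set (Fin m →₀ ℕ) :=
  {c | (monomial c (1 : K)) ∈ I ∧ ∀ c' : Fin m →₀ ℕ, c' ≤ c → c' ≠ c →
      (monomial c' (1 : K)) ∉ I}

/-- The polarization `v^℘ = ∏_{i=1}^n ∏_{j=1}^{c_i} x_{i,j}` of the monomial `v = x^c`. -/
def polMon (K : Type) [Field K] {m : ℕ} (b : Fin m → ℕ) (c : Fin m →₀ ℕ) :
    MvPolynomial (PolVars m b) K :=
  ∏ v ∈ Finset.univ.filter (fun v : PolVars m b => (v.2 : ℕ) < c v.1), X v

/-- The polarization `I^℘ ⊆ S^℘` of the monomial ideal `I`, generated by the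
polarizations of the minimal monomial generators of `I`. -/
def polarIdeal (K : Type) [Field K] {m : ℕ} (b : Fin m → ℕ)
    (I : Ideal (MvPolynomial (Fin m) K)) : Ideal (MvPolynomial (PolVars m b) K) :=
  Ideal.span (polMon K b '' MinGens K I)

/-- The squarefree monomial `x_{1,a_1+1} ⋯ x_{n,a_n+1} ∈ S^℘` associated with the
exponent vector `a` of a monomial `x^a ∈ Mon(S∖I)`. -/
def genL (K : Type) [Field K] {m : ℕ} (b : Fin m → ℕ) (a : Fin m →₀ ℕ) :
    MvPolynomial (PolVars m b) K :=
  ∏ v ∈ Finset.univ.filter (fun v : PolVars m b => (v.2 : ℕ) = a v.1), X v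

/-- The ideal `L(I) ⊆ S^℘`, generated by the monomials `x_{1,a_1+1} ⋯ x_{n,a_n+1}`
with `x^a ∈ Mon(S∖I)`. -/
def LIdeal (K : Type) [Field K] {m : ℕ} (b : Fin m → ℕ)
    (I : Ideal (MvPolynomial (Fin m) K)) : Ideal (MvPolynomial (PolVars m b) K) :=
  Ideal.span (genL K b '' {a | (monomial a (1 : K)) ∉ I})

/-- The monomial prime ideal `φ(x^a) = (x_{1,a_1+1}, …, x_{n,a_n+1}) ⊆ S^℘`. -/
def phiIdeal (K : Type) [Field K] {m : ℕ} (b : Fin m → ℕ) (a : Fin m →₀ ℕ) :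
    Ideal (MvPolynomial (PolVars m b) K) :=
  Ideal.span ((fun v => (X v : MvPolynomial (PolVars m b) K)) ''
    {v : PolVars m b | (v.2 : ℕ) = a v.1})

/-- The set of faces of the simplicial complex `Δ(I)` on the vertex set `𝒮`, whose
Stanley–Reisner ideal is `I^℘`: a finite set `F` of vertices is a face iff the
squarefree monomial `∏_{v ∈ F} v` does not belong to `I^℘`. -/
def facesDelta (K : Type) [Field K] {m : ℕ} (b : Fin m → ℕ)
    (I : Ideal (MvPolynomial (Fin m) K)) : Set (Finset (PolVars m b)) :=
  {F | (∏ v ∈ F, (X v : MvPolynomial (PolVars m b) K)) ∉ polarIdeal K b I}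

/-- `F` is a facet (maximal face) of the simplicial complex (set of faces) `Δ`. -/
def IsFacetOf {V : Type} (Δ : Set (Finset V)) (F : Finset V) : Prop :=
  F ∈ Δ ∧ ∀ G ∈ Δ, F ⊆ G → F = G

/-- Zero-dimensionality data for a monomial ideal: `I` is a proper monomial ideal and,
for each `i`, `b i ≥ 1` is the smallest positive integer with `x_i^{b i} ∈ I`
(equivalently, `dim S/I = 0` with the `b i` minimal). -/
def ZeroDimData (K : Type) [Field K] {m : ℕ} (b : Fin m → ℕ)
    (I : Ideal (MvPolynomial (Fin m) K)) : Prop :=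
  IsMonomialIdeal I ∧ I ≠ ⊤ ∧ ∀ i : Fin m, 1 ≤ b i ∧
    (monomial (Finsupp.single i (b i)) (1 : K)) ∈ I ∧
    ∀ j : ℕ, j < b i → (monomial (Finsupp.single i j) (1 : K)) ∉ I

/-- The deletion `del_Δ(v) = {G ∈ Δ : v ∉ G}`. -/
def delC {V : Type} (Δ : Set (Finset V)) (v : V) : Set (Finset V) :=
  {G ∈ Δ | v ∉ G}

/-- The link `link_Δ(v) = {G ∈ Δ : v ∉ G and G ∪ {v} ∈ Δ}`. -/
def linkC {V : Type} [DecidableEq V] (Δ : Set (Finset V)) (v : V) : Set (Finset V) :=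
  {G ∈ Δ | v ∉ G ∧ insert v G ∈ Δ}

/-- Vertex decomposability of a simplicial complex (given as its set of faces):
`Δ` is vertex decomposable if it is a simplex, or it contains a vertex `v` such that
(i) every facet of `del_Δ(v)` is a facet of `Δ` (`v` is a shedding vertex), and
(ii) both `del_Δ(v)` and `link_Δ(v)` are vertex decomposable. -/
inductive IsVertexDecomposable {V : Type} [DecidableEq V] : Set (Finset V) → Prop
  | simplex (F : Finset V) : IsVertexDecomposable {G | G ⊆ F}
  | shed (Δ : Set (Finset V)) (v : V) (hv : {v} ∈ Δ)
      (hshed : ∀ F : Finset V, IsFacetOf (delC Δ v) F → IsFacetOf Δ F)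
      (hdel : IsVertexDecomposable (delC Δ v))
      (hlink : IsVertexDecomposable (linkC Δ v)) : IsVertexDecomposable Δ

/-- The vertex map replacing `x_{i₀,j}` by `x_{i₀,j-1}` and fixing all other vertices. -/
def shiftDown {m : ℕ} {b : Fin m → ℕ} (i₀ : Fin m) (v : PolVars m b) : PolVars m b :=
  ⟨v.1, ⟨(v.2 : ℕ) - (if v.1 = i₀ then 1 else 0),
    Nat.lt_of_le_of_lt (Nat.sub_le _ _) v.2.isLt⟩⟩

/-- `set(u)` for a generator `u = genL a` of `L(I)` with respect to the order `r`:
the set of variables `x` of `S^℘` such that `x·u` lies in the ideal generated by the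
generators of `L(I)` preceding `u`. -/
def setOfGen (K : Type) [Field K] {m : ℕ} (b : Fin m → ℕ)
    (I : Ideal (MvPolynomial (Fin m) K))
    (r : (Fin m →₀ ℕ) → (Fin m →₀ ℕ) → Prop) (a : Fin m →₀ ℕ) : Set (PolVars m b) :=
  {v | ∃ a' : Fin m →₀ ℕ, (monomial a' (1 : K)) ∉ I ∧ r a' a ∧ a' ≠ a ∧
      genL K b a' ∣ X v * genL K b a}

/-- `J(u,i)`: the weakly increasing sequence of the second indices of the variables
`x_{i,·}` dividing the monomial with exponent vector `e` (counted with multiplicity). -/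
def rowList {m : ℕ} {b : Fin m → ℕ} (e : PolVars m b →₀ ℕ) (i : Fin m) : List ℕ :=
  Multiset.sort (∑ j : Fin (b i), Multiset.replicate (e ⟨i, j⟩) (j : ℕ)) (· ≤ ·)

/-- Lexicographic (weak) order on sequences of natural numbers. -/
def lexLE (l l' : List ℕ) : Prop := l = l' ∨ List.Lex (· < ·) l l'

/-- The exponent vectors of the (minimal) monomial generators of `L(I)^k`:
products of `k` generators of `L(I)`. -/
def GLkE (K : Type) [Field K] {m : ℕ} (b : Fin m → ℕ)
    (I : Ideal (MvPolynomial (Fin m) K)) (k : ℕ) : Set (PolVars m b →₀ ℕ) :=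
  {e | ∃ f : Fin k → (Fin m →₀ ℕ), (∀ j, (monomial (f j) (1 : K)) ∉ I) ∧
      (monomial e (1 : K) : MvPolynomial (PolVars m b) K) = ∏ j, genL K b (f j)}

/-- The depth of a module `M` with respect to the ideal `J`: the maximal length of an
`M`-regular sequence consisting of elements of `J`. -/
def myDepth (R : Type) [CommRing R] (J : Ideal R) (M : Type) [AddCommGroup M]
    [Module R M] : ℕ :=
  sSup {k : ℕ | ∃ rs : List R, rs.length = k ∧ (∀ r ∈ rs, r ∈ J) ∧
      RingTheory.Sequence.IsRegular M rs}

/-- `max{deg lcm(u_1, …, u_k) : u_1, …, u_k ∈ Mon(S∖I)}`; the degree of the lcm of the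
monomials `x^{f 1}, …, x^{f k}` is `∑_i max_j (f j) i`. -/
def maxLcmDeg (K : Type) [Field K] {m : ℕ} (I : Ideal (MvPolynomial (Fin m) K))
    (k : ℕ) : ℕ :=
  sSup {d : ℕ | ∃ f : Fin k → (Fin m →₀ ℕ), (∀ j, (monomial (f j) (1 : K)) ∉ I) ∧
      d = ∑ i : Fin m, Finset.univ.sup (fun j => (f j) i)}


/-! A prime `P ⊇ I^℘` contains, for each monomial `x^c ∈ I`, a variable `x_{i,j}` with
`j ≤ c_i`. Letting `a_i + 1` be the least `j` with `x_{i,j} ∈ P` (it exists because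
`x_i^{b_i} ∈ I`) gives `x^a ∉ I` and `φ(x^a) ⊆ P`. Conversely, for `x^a ∉ I` the ideal
`φ(x^a)`, generated by variables, is a prime containing `I^℘`, and `φ(x^a) ⊆ φ(x^{a'})`
forces `a = a'`. Minimality, injectivity and surjectivity all follow from these facts. -/

namespace MvPolynomial

section SpanX

open scoped Classical

variable {σ R : Type*} [CommRing R]

def killVars (s : Set σ) : MvPolynomial σ R →ₐ[R] MvPolynomial σ R :=
  aeval fun v => if v ∈ s then 0 else X v

lemma killVars_X (s : Set σ) (v : σ) :
    killVars s (X v : MvPolynomial σ R) = if v ∈ s then 0 else X v :=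
  aeval_X _ _

lemma sub_killVars_mem_span_X_image (s : Set σ) (f : MvPolynomial σ R) :
    f - killVars s f ∈ Ideal.span (X '' s) := by
  induction f using MvPolynomial.induction_on with
  | C r => simp [killVars]
  | add p q hp hq =>
    rw [map_add, add_sub_add_comm]
    exact Ideal.add_mem _ hp hq
  | mul_X p v hp =>
    rw [map_mul, killVars_X]
    by_cases hv : v ∈ s
    · rw [if_pos hv, mul_zero, sub_zero]
      exact Ideal.mul_mem_left _ _ (Ideal.subset_span ⟨v, hv, rfl⟩)
    · rw [if_neg hv, ← sub_mul]
      exact Ideal.mul_mem_right _ _ hp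

lemma ker_killVars (s : Set σ) :
    RingHom.ker (killVars s : MvPolynomial σ R →ₐ[R] MvPolynomial σ R) = Ideal.span (X '' s) := by
  refine le_antisymm (fun f hf => ?_) ?_
  · simpa [RingHom.mem_ker.mp hf] using sub_killVars_mem_span_X_image s f
  · rw [Ideal.span_le]
    rintro _ ⟨v, hv, rfl⟩
    simp [killVars_X, hv]

lemma isPrime_span_X_image [IsDomain R] (s : Set σ) :
    (Ideal.span (X '' s : Set (MvPolynomial σ R))).IsPrime :=
  ker_killVars (R := R) s ▸ RingHom.ker_isPrime _

lemma X_mem_span_X_image_iff [Nontrivial R] {s : Set σ} {w : σ} :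
    (X w : MvPolynomial σ R) ∈ Ideal.span (X '' s) ↔ w ∈ s := by
  simp [mem_ideal_span_X_image, support_X, Finsupp.single_apply]

end SpanX

lemma monomial_one_mem_of_le {σ R : Type*} [CommSemiring R] {I : Ideal (MvPolynomial σ R)}
    {c a : σ →₀ ℕ} (hc : monomial c (1 : R) ∈ I) (h : c ≤ a) : monomial a (1 : R) ∈ I :=
  I.mem_of_dvd (monomial_dvd_monomial.mpr ⟨Or.inr h, one_dvd _⟩) hc

end MvPolynomial

section Polarization

variable {K : Type} [Field K] {m : ℕ} {b : Fin m → ℕ} {I : Ideal (MvPolynomial (Fin m) K)}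

lemma exists_mem_minGens_le {a : Fin m →₀ ℕ} (ha : monomial a (1 : K) ∈ I) :
    ∃ c ∈ MinGens K I, c ≤ a := by
  obtain ⟨c, hca, hc, hmin⟩ :=
    exists_minimal_le_of_wellFoundedLT (fun c => monomial c (1 : K) ∈ I) a ha
  exact ⟨c, ⟨hc, fun c' hle hne hc' => hne (le_antisymm hle (hmin hc' hle))⟩, hca⟩

lemma lt_of_monomial_notMem {a : Fin m →₀ ℕ} {i : Fin m}
    (hb : monomial (Finsupp.single i (b i)) (1 : K) ∈ I) (ha : monomial a (1 : K) ∉ I) :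
    a i < b i := by
  by_contra! h
  exact ha (monomial_one_mem_of_le hb (Finsupp.single_le_iff.mpr h))

instance phiIdeal.isPrime (a : Fin m →₀ ℕ) : (phiIdeal K b a).IsPrime :=
  isPrime_span_X_image _

lemma X_mem_phiIdeal_iff {a : Fin m →₀ ℕ} {v : PolVars m b} :
    (X v : MvPolynomial (PolVars m b) K) ∈ phiIdeal K b a ↔ (v.2 : ℕ) = a v.1 :=
  X_mem_span_X_image_iff

lemma eq_of_phiIdeal_le {a a' : Fin m →₀ ℕ} (ha : ∀ i, a i < b i)
    (h : phiIdeal K b a ≤ phiIdeal K b a') : a = a' :=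
  Finsupp.ext fun i =>
    X_mem_phiIdeal_iff.mp (h (X_mem_phiIdeal_iff.mpr rfl : X ⟨i, ⟨a i, ha i⟩⟩ ∈ _))

lemma polarIdeal_le_phiIdeal {a : Fin m →₀ ℕ} (hab : ∀ i, a i < b i)
    (ha : monomial a (1 : K) ∉ I) : polarIdeal K b I ≤ phiIdeal K b a := by
  rw [polarIdeal, Ideal.span_le]
  rintro _ ⟨c, hc, rfl⟩
  obtain ⟨i, hi⟩ : ∃ i, a i < c i := by
    by_contra! h
    exact ha (monomial_one_mem_of_le hc.1 (Finsupp.le_def.mpr h))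
  rw [SetLike.mem_coe, polMon, Ideal.IsPrime.prod_mem_iff]
  exact ⟨⟨i, ⟨a i, hab i⟩⟩, by simpa using hi, X_mem_phiIdeal_iff.mpr rfl⟩

lemma exists_X_mem_of_monomial_mem {P : Ideal (MvPolynomial (PolVars m b) K)} [P.IsPrime]
    (hP : polarIdeal K b I ≤ P) {c : Fin m →₀ ℕ} (hc : monomial c (1 : K) ∈ I) :
    ∃ v : PolVars m b, (v.2 : ℕ) < c v.1 ∧ X v ∈ P := by
  obtain ⟨c', hc', hle⟩ := exists_mem_minGens_le hc
  have hmem : polMon K b c' ∈ P := hP (Ideal.subset_span ⟨c', hc', rfl⟩)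
  rw [polMon, Ideal.IsPrime.prod_mem_iff] at hmem
  obtain ⟨v, hv, hX⟩ := hmem
  exact ⟨v, (Finset.mem_filter.mp hv).2.trans_le (hle v.1), hX⟩

-- The witness: `a_i` is the least `j` with `x_{i,j+1} ∈ P`, which exists since `x_i^{b_i} ∈ I`.
lemma exists_phiIdeal_le (hb : ∀ i, monomial (Finsupp.single i (b i)) (1 : K) ∈ I)
    {P : Ideal (MvPolynomial (PolVars m b) K)} [P.IsPrime] (hP : polarIdeal K b I ≤ P) :
    ∃ a : Fin m →₀ ℕ, monomial a (1 : K) ∉ I ∧ phiIdeal K b a ≤ P := by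
  classical
  have row : ∀ i, ∃ j, ∃ h : j < b i, X ⟨i, ⟨j, h⟩⟩ ∈ P := by
    intro i
    obtain ⟨⟨i', j⟩, hj, hX⟩ := exists_X_mem_of_monomial_mem hP (hb i)
    obtain rfl : i' = i := by
      by_contra hne
      simp [Ne.symm hne] at hj
    exact ⟨j, j.2, hX⟩
  let a : Fin m →₀ ℕ := Finsupp.equivFunOnFinite.symm fun i => Nat.find (row i)
  refine ⟨a, fun ha => ?_, ?_⟩
  · obtain ⟨v, hv, hX⟩ := exists_X_mem_of_monomial_mem hP ha
    exact Nat.find_min (row v.1) hv ⟨v.2.2, hX⟩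
  · rw [phiIdeal, Ideal.span_le]
    rintro _ ⟨⟨i, j⟩, hj, rfl⟩
    obtain ⟨h, hX⟩ := Nat.find_spec (row i)
    obtain rfl : j = ⟨_, h⟩ := Fin.ext hj
    exact hX

lemma phiIdeal_mem_minimalPrimes (hb : ∀ i, monomial (Finsupp.single i (b i)) (1 : K) ∈ I)
    {a : Fin m →₀ ℕ} (ha : monomial a (1 : K) ∉ I) :
    phiIdeal K b a ∈ (polarIdeal K b I).minimalPrimes := by
  refine ⟨⟨inferInstance, polarIdeal_le_phiIdeal (fun i => lt_of_monomial_notMem (hb i) ha) ha⟩,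
    fun q ⟨_, hIq⟩ hqa => ?_⟩
  obtain ⟨a', ha', hle⟩ := exists_phiIdeal_le hb hIq
  obtain rfl := eq_of_phiIdeal_le (fun i => lt_of_monomial_notMem (hb i) ha') (hle.trans hqa)
  exact hle

end Polarization

/-- Let `I ⊂ S = K[x_1,…,x_n]` be a monomial ideal with `dim S/I = 0`.
The map `φ` sending a monomial `u = x^a ∈ Mon(S∖I)` to the monomial prime ideal
`φ(u) = (x_{1,a_1+1}, …, x_{n,a_n+1}) ⊂ S^℘` is well defined (i.e. `a_i + 1 ≤ b_i`
for all `i`) and establishes a bijection between `Mon(S∖I)` and `Min(I^℘)`. -/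
theorem statement0 {K : Type} [Field K] {n : ℕ} (b : Fin n → ℕ)
    (I : Ideal (MvPolynomial (Fin n) K)) (hI : ZeroDimData K b I) :
    (∀ a : Fin n →₀ ℕ, (monomial a (1 : K)) ∉ I → ∀ i : Fin n, a i < b i) ∧
    Set.BijOn (phiIdeal K b) {a : Fin n →₀ ℕ | (monomial a (1 : K)) ∉ I}
      (polarIdeal K b I).minimalPrimes := by
  have hb : ∀ i, monomial (Finsupp.single i (b i)) (1 : K) ∈ I := fun i => (hI.2.2 i).2.1
  have hlt : ∀ a : Fin n →₀ ℕ, monomial a (1 : K) ∉ I → ∀ i, a i < b i :=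
    fun a ha i => lt_of_monomial_notMem (hb i) ha
  refine ⟨hlt, fun a ha => phiIdeal_mem_minimalPrimes hb ha,
    fun a ha a' _ h => eq_of_phiIdeal_le (hlt a ha) h.le, fun P hP => ?_⟩
  have hPprime : P.IsPrime := hP.1.1
  obtain ⟨a, ha, hle⟩ := exists_phiIdeal_le hb hP.1.2
  exact ⟨a, ha, le_antisymm hle (hP.2 ⟨inferInstance, polarIdeal_le_phiIdeal (hlt a ha) ha⟩ hle)⟩

end
end

section
/- With respect to any total order u_1 < u_2 < ⋯ < u_m on G(L(I)) extending the componentwise partial order, the decomposition function b of L(I) is regular. Explicitly: for u = x_{1,a_1+1}⋯x_{n,a_n+1} ∈ G(L(I)), one has set(u) = {x_{1,1},…,x_{1,a_1}, x_{2,1},…,x_{2,a_2}, …, x_{n,1},…,x_{n,a_n}}; and for every x_{i,j} ∈ set(u), b(x_{i,j}·u) = x_{i,j}·(u / x_{i,a_i+1}) and set(b(x_{i,j}·u)) = set(u) ∖ {x_{i,j+1},…,x_{i,a_i}} ⊆ set(u). -/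
open MvPolynomial

noncomputable section

/-! The generator `genL a` of `L(I)` is squarefree with exactly one variable from each row `i`,
namely `x_{i,a_i+1}`. Hence a generator `genL a'` divides `x_v · genL a` only if `a' = a` or `a'` is
`a` with its entry in row `v.1` replaced by the index of `v`. Since `Mon(S∖I)` is closed under
divisibility and the order extends the componentwise one, the second option is available and
precedes `a` exactly when `x_v` lies below `x_{v.1, a_{v.1}+1}` in its row; this gives `set(u)`
and `b(x_v·u)`, and `set(b(x_v·u))` is then read off by comparing index sets. -/

lemma monomial_one_notMem_of_le {σ R : Type*} [CommSemiring R] {I : Ideal (MvPolynomial σ R)}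
    {c d : σ →₀ ℕ} (hc : monomial c (1 : R) ∉ I) (hdc : d ≤ c) : monomial d (1 : R) ∉ I :=
  fun hd => hc (I.mem_of_dvd (monomial_dvd_monomial.mpr ⟨Or.inr hdc, one_dvd _⟩) hd)

lemma Finsupp.update_le_self {ι M : Type*} [DecidableEq ι] [Zero M] [Preorder M] (a : ι →₀ M)
    {i : ι} {j : M} (hj : j ≤ a i) : a.update i j ≤ a := by
  intro k
  rw [Finsupp.update_apply]
  split_ifs with hk
  · exact hk ▸ hj
  · exact le_rfl

lemma Finsupp.le_update_self {ι M : Type*} [DecidableEq ι] [Zero M] [Preorder M] (a : ι →₀ M)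
    {i : ι} {j : M} (hj : a i ≤ j) : a ≤ a.update i j := by
  intro k
  rw [Finsupp.update_apply]
  split_ifs with hk
  · exact hk ▸ hj
  · exact le_rfl

lemma Finsupp.update_ne_self {ι M : Type*} [DecidableEq ι] [Zero M] (a : ι →₀ M) {i : ι} {j : M}
    (hj : j ≠ a i) : a.update i j ≠ a :=
  fun h => hj (by simpa using DFunLike.congr_fun h i)

lemma Finsupp.forall_eq_or_eq_update_iff {ι M : Type*} [DecidableEq ι] [Zero M]
    {a a' : ι →₀ M} {i : ι} {j : M} :
    (∀ k, a' k = a k ∨ (k = i ∧ a' k = j)) ↔ a' = a ∨ a' = a.update i j := by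
  constructor
  · intro h
    by_cases hi : a' i = a i
    · refine Or.inl (Finsupp.ext fun k => ?_)
      rcases h k with hk | ⟨rfl, -⟩
      exacts [hk, hi]
    · refine Or.inr (Finsupp.ext fun k => ?_)
      rw [Finsupp.update_apply]
      split_ifs with hk
      · subst hk
        exact ((h k).resolve_left hi).2
      · exact (h k).resolve_right (fun h' => hk h'.1)
  · rintro (rfl | rfl) k
    · exact Or.inl rfl
    · rw [Finsupp.update_apply]
      by_cases hk : k = i <;> simp [hk]

section GenL

variable {K : Type} [Field K] {n : ℕ} {b : Fin n → ℕ}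

lemma polVars_eq_iff {x y : PolVars n b} : x = y ↔ x.1 = y.1 ∧ (x.2 : ℕ) = y.2 := by
  obtain ⟨i, j⟩ := x
  obtain ⟨i', j'⟩ := y
  constructor
  · rintro ⟨⟩
    exact ⟨rfl, rfl⟩
  · rintro ⟨rfl, h⟩
    exact congrArg _ (Fin.ext h)

lemma lt_of_zeroDimData {I : Ideal (MvPolynomial (Fin n) K)} (hI : ZeroDimData K b I)
    {a : Fin n →₀ ℕ} (ha : monomial a (1 : K) ∉ I) (i : Fin n) : a i < b i := by
  by_contra! h
  exact monomial_one_notMem_of_le ha (Finsupp.single_le_iff.mpr h) (hI.2.2 i).2.1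

def genExp (b : Fin n → ℕ) (a : Fin n →₀ ℕ) : PolVars n b →₀ ℕ :=
  ∑ v ∈ Finset.univ.filter (fun v : PolVars n b => (v.2 : ℕ) = a v.1), Finsupp.single v 1

lemma genExp_apply (a : Fin n →₀ ℕ) (x : PolVars n b) :
    genExp b a x = if (x.2 : ℕ) = a x.1 then 1 else 0 := by
  simp [genExp, Finsupp.finsetSum_apply, Finsupp.single_apply]

lemma genL_eq_monomial (a : Fin n →₀ ℕ) : genL K b a = monomial (genExp b a) 1 := by
  rw [genExp, monomial_sum_one]
  rfl

lemma X_mul_genL (v : PolVars n b) (a : Fin n →₀ ℕ) :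
    (X v : MvPolynomial (PolVars n b) K) * genL K b a
      = monomial (Finsupp.single v 1 + genExp b a) 1 := by
  rw [genL_eq_monomial, X, monomial_mul, one_mul]

lemma genL_dvd_X_mul_genL_iff {a a' : Fin n →₀ ℕ}
    (ha' : ∀ i, a' i < b i) (v : PolVars n b) :
    genL K b a' ∣ (X v : MvPolynomial (PolVars n b) K) * genL K b a ↔
      a' = a ∨ a' = a.update v.1 v.2 := by
  rw [genL_eq_monomial, X_mul_genL, monomial_dvd_monomial, ← Finsupp.forall_eq_or_eq_update_iff]
  simp only [one_ne_zero, false_or, dvd_refl, and_true]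
  constructor
  · intro hle i
    have hi := hle ⟨i, ⟨a' i, ha' i⟩⟩
    simp only [Finsupp.add_apply, genExp_apply, Finsupp.single_apply, polVars_eq_iff,
      if_true] at hi
    by_cases hai : a' i = a i
    · exact Or.inl hai
    by_cases hv : v.1 = i ∧ (v.2 : ℕ) = a' i
    · exact Or.inr ⟨hv.1.symm, hv.2.symm⟩
    · simp [hai, hv] at hi
  · intro h x
    simp only [Finsupp.add_apply, genExp_apply, Finsupp.single_apply, polVars_eq_iff]
    rcases h x.1 with hx | ⟨hx, hxv⟩
    · rw [hx]
      split_ifs <;> omega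
    · split_ifs <;> grind

lemma X_mul_genL_eq_X_mul_genL_update {a : Fin n →₀ ℕ}
    (v : PolVars n b) (hv : a v.1 < b v.1) :
    (X v : MvPolynomial (PolVars n b) K) * genL K b a
      = X ⟨v.1, ⟨a v.1, hv⟩⟩ * genL K b (a.update v.1 v.2) := by
  rw [X_mul_genL, X_mul_genL]
  congr 2
  ext x
  simp only [Finsupp.add_apply, genExp_apply, Finsupp.single_apply, polVars_eq_iff,
    Finsupp.update_apply]
  by_cases hx : x.1 = v.1
  · simp only [hx, true_and, if_true]
    split_ifs <;> omega
  · simp [hx, Ne.symm hx]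

lemma setOfGen_eq {I : Ideal (MvPolynomial (Fin n) K)} (hI : ZeroDimData K b I)
    {r : (Fin n →₀ ℕ) → (Fin n →₀ ℕ) → Prop}
    (hantisymm : ∀ a a', (monomial a (1 : K)) ∉ I → (monomial a' (1 : K)) ∉ I →
      r a a' → r a' a → a = a')
    (hext : ∀ a a', (monomial a (1 : K)) ∉ I → (monomial a' (1 : K)) ∉ I →
      (∀ i, a i ≤ a' i) → r a a')
    {a : Fin n →₀ ℕ} (ha : (monomial a (1 : K)) ∉ I) :
    setOfGen K b I r a = {v : PolVars n b | (v.2 : ℕ) < a v.1} := by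
  ext v
  constructor
  · rintro ⟨a', ha', hr, hne, hdvd⟩
    rcases (genL_dvd_X_mul_genL_iff (lt_of_zeroDimData hI ha') v).mp hdvd with rfl | rfl
    · exact absurd rfl hne
    · show (v.2 : ℕ) < a v.1
      refine lt_of_not_ge fun hva => ?_
      exact hne (hantisymm _ _ ha' ha hr (hext _ _ ha ha' (Finsupp.le_update_self a hva)))
  · intro hv
    have hle := Finsupp.update_le_self a (le_of_lt hv)
    have hu := monomial_one_notMem_of_le ha hle
    exact ⟨_, hu, hext _ _ hu ha hle, Finsupp.update_ne_self a (ne_of_lt hv),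
      (genL_dvd_X_mul_genL_iff (lt_of_zeroDimData hI hu) v).mpr (Or.inr rfl)⟩

end GenL

theorem statement9_general {K : Type} [Field K] {n : ℕ} (b : Fin n → ℕ)
    (I : Ideal (MvPolynomial (Fin n) K)) (hI : ZeroDimData K b I)
    (r : (Fin n →₀ ℕ) → (Fin n →₀ ℕ) → Prop)
    (hrefl : ∀ a, (monomial a (1 : K)) ∉ I → r a a)
    (hantisymm : ∀ a a', (monomial a (1 : K)) ∉ I → (monomial a' (1 : K)) ∉ I →
      r a a' → r a' a → a = a')
    (hext : ∀ a a', (monomial a (1 : K)) ∉ I → (monomial a' (1 : K)) ∉ I →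
      (∀ i, a i ≤ a' i) → r a a')
    (a : Fin n →₀ ℕ) (ha : (monomial a (1 : K)) ∉ I) :
    setOfGen K b I r a = {v : PolVars n b | (v.2 : ℕ) < a v.1} ∧
    ∀ v : PolVars n b, (v.2 : ℕ) < a v.1 →
      (monomial (Finsupp.update a v.1 (v.2 : ℕ)) (1 : K)) ∉ I ∧
      genL K b (Finsupp.update a v.1 (v.2 : ℕ)) ∣ X v * genL K b a ∧
      (∃ w : PolVars n b, w.1 = v.1 ∧ (w.2 : ℕ) = a v.1 ∧
        X v * genL K b a = X w * genL K b (Finsupp.update a v.1 (v.2 : ℕ))) ∧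
      (∀ a'' : Fin n →₀ ℕ, (monomial a'' (1 : K)) ∉ I →
        genL K b a'' ∣ X v * genL K b a → r (Finsupp.update a v.1 (v.2 : ℕ)) a'') ∧
      setOfGen K b I r (Finsupp.update a v.1 (v.2 : ℕ))
        = setOfGen K b I r a \ {w : PolVars n b | w.1 = v.1 ∧ (v.2 : ℕ) ≤ (w.2 : ℕ)} ∧
      setOfGen K b I r (Finsupp.update a v.1 (v.2 : ℕ)) ⊆ setOfGen K b I r a := by
  have hset := setOfGen_eq hI hantisymm hext ha
  refine ⟨hset, fun v hv => ?_⟩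
  have hle := Finsupp.update_le_self a (le_of_lt hv)
  have hu := monomial_one_notMem_of_le ha hle
  have hset_update : setOfGen K b I r (a.update v.1 v.2)
      = setOfGen K b I r a \ {w : PolVars n b | w.1 = v.1 ∧ (v.2 : ℕ) ≤ (w.2 : ℕ)} := by
    rw [hset, setOfGen_eq hI hantisymm hext hu]
    ext x
    by_cases hx : x.1 = v.1
    · simp only [Set.mem_sdiff, Set.mem_ofPred_eq, Finsupp.update_apply, hx, if_true, true_and]
      omega
    · simp [Finsupp.update_apply, hx]
  refine ⟨hu, (genL_dvd_X_mul_genL_iff (lt_of_zeroDimData hI hu) v).mpr (Or.inr rfl),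
    ⟨⟨v.1, ⟨a v.1, lt_of_zeroDimData hI ha v.1⟩⟩, rfl, rfl, X_mul_genL_eq_X_mul_genL_update v _⟩,
    fun a'' ha'' hdvd => ?_, hset_update, hset_update ▸ Set.sdiff_subset⟩
  rcases (genL_dvd_X_mul_genL_iff (lt_of_zeroDimData hI ha'') v).mp hdvd with rfl | rfl
  · exact hext _ _ hu ha'' hle
  · exact hrefl _ hu

/-- With respect to any total order on `G(L(I))` extending the
componentwise partial order, the decomposition function `b` of `L(I)` is regular.
Explicitly, for `u = x_{1,a_1+1}⋯x_{n,a_n+1} ∈ G(L(I))`: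
`set(u) = {x_{i,j} : 1 ≤ j ≤ a_i}`; and for every `x_{i,j} ∈ set(u)`, the value
`b(x_{i,j}·u)` is the generator `x_{i,j}·(u/x_{i,a_i+1})` (i.e. the generator of `L(I)`
associated with `a` updated at `i` to `j−1`, which is the `r`-least generator dividing
`x_{i,j}·u`), and `set(b(x_{i,j}·u)) = set(u) ∖ {x_{i,j+1},…,x_{i,a_i}} ⊆ set(u)`. -/
theorem statement9 {K : Type} [Field K] {n : ℕ} (b : Fin n → ℕ)
    (I : Ideal (MvPolynomial (Fin n) K)) (hI : ZeroDimData K b I)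
    (r : (Fin n →₀ ℕ) → (Fin n →₀ ℕ) → Prop)
    (hrefl : ∀ a, (monomial a (1 : K)) ∉ I → r a a)
    (hantisymm : ∀ a a', (monomial a (1 : K)) ∉ I → (monomial a' (1 : K)) ∉ I →
      r a a' → r a' a → a = a')
    (htrans : ∀ a a' a'', (monomial a (1 : K)) ∉ I → (monomial a' (1 : K)) ∉ I →
      (monomial a'' (1 : K)) ∉ I → r a a' → r a' a'' → r a a'')
    (htotal : ∀ a a', (monomial a (1 : K)) ∉ I → (monomial a' (1 : K)) ∉ I →
      r a a' ∨ r a' a)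
    (hext : ∀ a a', (monomial a (1 : K)) ∉ I → (monomial a' (1 : K)) ∉ I →
      (∀ i, a i ≤ a' i) → r a a')
    (a : Fin n →₀ ℕ) (ha : (monomial a (1 : K)) ∉ I) :
    setOfGen K b I r a = {v : PolVars n b | (v.2 : ℕ) < a v.1} ∧
    ∀ v : PolVars n b, (v.2 : ℕ) < a v.1 →
      (monomial (Finsupp.update a v.1 (v.2 : ℕ)) (1 : K)) ∉ I ∧
      genL K b (Finsupp.update a v.1 (v.2 : ℕ)) ∣ X v * genL K b a ∧
      (∃ w : PolVars n b, w.1 = v.1 ∧ (w.2 : ℕ) = a v.1 ∧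
        X v * genL K b a = X w * genL K b (Finsupp.update a v.1 (v.2 : ℕ))) ∧
      (∀ a'' : Fin n →₀ ℕ, (monomial a'' (1 : K)) ∉ I →
        genL K b a'' ∣ X v * genL K b a → r (Finsupp.update a v.1 (v.2 : ℕ)) a'') ∧
      setOfGen K b I r (Finsupp.update a v.1 (v.2 : ℕ))
        = setOfGen K b I r a \ {w : PolVars n b | w.1 = v.1 ∧ (v.2 : ℕ) ≤ (w.2 : ℕ)} ∧
      setOfGen K b I r (Finsupp.update a v.1 (v.2 : ℕ)) ⊆ setOfGen K b I r a :=
  statement9_general b I hI r hrefl hantisymm hext a ha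

end
end

section
/- Assume b_n > 1. Then the facets of del_{Δ(I)}(x_{n,1}) are exactly the facets of Δ(I) not containing x_{n,1}; in particular, every facet of del_{Δ(I)}(x_{n,1}) is a facet of Δ(I), i.e., x_{n,1} is a shedding vertex of Δ(I). -/
/-!
Let `F` be a facet of `del_{Δ(I)}(x_{n,1})` and suppose a face `G ⊋ F` of `Δ(I)` exists; then
`x_{n,1} ∈ G`. The polarization of a minimal generator involving `x_n` is divisible by
`x_{n,1}`, so as long as `x_{n,1}` is absent, any vertex `x_{n,j}` may be added to a face.
By maximality `F` therefore already contains `x_{n,2}, …, x_{n,b_n}`, and `G` contains the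
whole row `x_{n,1} ⋯ x_{n,b_n}`, the polarization of the minimal generator `x_n^{b_n}` of `I`.
-/

open MvPolynomial

noncomputable section

lemma prod_X_eq_monomial_sum_single {K : Type} [Field K] {V : Type} (F : Finset V) :
    (∏ v ∈ F, (X v : MvPolynomial V K)) = monomial (∑ v ∈ F, Finsupp.single v 1) 1 := by
  rw [monomial_sum_one]
  rfl

lemma sum_single_one_le_iff {V : Type} [DecidableEq V] (A B : Finset V) :
    (∑ v ∈ A, Finsupp.single v (1 : ℕ)) ≤ ∑ v ∈ B, Finsupp.single v 1 ↔ A ⊆ B := by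
  have hind : ∀ (C : Finset V) w, (∑ v ∈ C, Finsupp.single v (1 : ℕ)) w = if w ∈ C then 1 else 0 :=
    fun C w => by simp [Finset.sum_apply', Finsupp.single_apply]
  simp only [Finsupp.le_def, hind]
  refine ⟨fun h w hw => ?_, fun h w => ?_⟩
  · by_contra hwB
    simpa [hw, hwB] using h w
  · by_cases hw : w ∈ A
    · simp [hw, h hw]
    · simp [hw]

lemma prod_X_mem_polarIdeal_iff {K : Type} [Field K] {m : ℕ} (b : Fin m → ℕ)
    (I : Ideal (MvPolynomial (Fin m) K)) (F : Finset (PolVars m b)) :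
    (∏ v ∈ F, (X v : MvPolynomial (PolVars m b) K)) ∈ polarIdeal K b I ↔
      ∃ c ∈ MinGens K I, ∀ v : PolVars m b, (v.2 : ℕ) < c v.1 → v ∈ F := by
  classical
  have himg : polMon K b '' MinGens K I = (fun s => monomial s (1 : K)) ''
      ((fun c => ∑ v ∈ Finset.univ.filter (fun v : PolVars m b => (v.2 : ℕ) < c v.1),
        Finsupp.single v 1) '' MinGens K I) := by
    rw [Set.image_image]
    exact Set.image_congr fun c _ => prod_X_eq_monomial_sum_single _
  rw [polarIdeal, himg, prod_X_eq_monomial_sum_single, mem_ideal_span_monomial_image,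
    support_monomial, if_neg one_ne_zero]
  simp only [Finset.mem_singleton, forall_eq, Set.exists_mem_image, sum_single_one_le_iff]
  simp [Finset.subset_iff]

lemma single_mem_minGens {K : Type} [Field K] {m : ℕ} {I : Ideal (MvPolynomial (Fin m) K)}
    {i : Fin m} {k : ℕ} (hk : monomial (Finsupp.single i k) (1 : K) ∈ I)
    (hlt : ∀ j < k, monomial (Finsupp.single i j) (1 : K) ∉ I) :
    Finsupp.single i k ∈ MinGens K I := by
  refine ⟨hk, fun c hle hne => ?_⟩
  have hc : c = Finsupp.single i (c i) := by
    ext l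
    rcases eq_or_ne l i with rfl | hl
    · simp
    · simpa [Finsupp.single_apply, hl.symm] using Finsupp.le_def.mp hle l
  have hci : c i < k := by
    refine lt_of_le_of_ne (by simpa using Finsupp.le_def.mp hle i) fun h => hne ?_
    rw [hc, h]
  rw [hc]
  exact hlt _ hci

lemma IsFacetOf.delC {V : Type} {Δ : Set (Finset V)} {F : Finset V} (hF : IsFacetOf Δ F)
    {v : V} (hv : v ∉ F) : IsFacetOf (delC Δ v) F :=
  ⟨⟨hF.1, hv⟩, fun G hG => hF.2 G hG.1⟩

lemma IsFacetOf.mem_of_insert_mem {V : Type} [DecidableEq V] {Δ : Set (Finset V)}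
    {F : Finset V} (hF : IsFacetOf Δ F) {w : V} (hw : insert w F ∈ Δ) : w ∈ F := by
  rw [hF.2 _ hw (Finset.subset_insert w F)]
  exact Finset.mem_insert_self w F

section RowOfPolarization

variable {K : Type} [Field K] {m : ℕ} {b : Fin m → ℕ} {I : Ideal (MvPolynomial (Fin m) K)}

lemma insert_mem_facesDelta {F : Finset (PolVars m b)} (hF : F ∈ facesDelta K b I)
    {v₀ w : PolVars m b} (hv₀ : (v₀.2 : ℕ) = 0) (hw : w.1 = v₀.1) (hv₀F : v₀ ∉ insert w F) :
    insert w F ∈ facesDelta K b I := by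
  intro hmem
  obtain ⟨c, hc, hsub⟩ := (prod_X_mem_polarIdeal_iff b I _).mp hmem
  by_cases hrow : 0 < c v₀.1
  · exact hv₀F (hsub v₀ (by omega))
  · refine hF ((prod_X_mem_polarIdeal_iff b I F).mpr ⟨c, hc, fun v hv => ?_⟩)
    refine (Finset.mem_insert.mp (hsub v hv)).resolve_left ?_
    intro hvw
    rw [hvw, congrArg c hw] at hv
    omega

lemma exists_notMem_of_mem_facesDelta {i : Fin m} (hi : Finsupp.single i (b i) ∈ MinGens K I)
    {G : Finset (PolVars m b)} (hG : G ∈ facesDelta K b I) : ∃ j, ⟨i, j⟩ ∉ G := by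
  by_contra! hrow
  refine hG ((prod_X_mem_polarIdeal_iff b I G).mpr ⟨_, hi, fun ⟨l, j⟩ hv => ?_⟩)
  obtain rfl : l = i := by
    by_contra hl
    simp [Ne.symm hl] at hv
  exact hrow j

theorem isFacetOf_of_isFacetOf_delC {v₀ : PolVars m b} (hv₀ : (v₀.2 : ℕ) = 0)
    (hmin : Finsupp.single v₀.1 (b v₀.1) ∈ MinGens K I) {F : Finset (PolVars m b)}
    (hF : IsFacetOf (delC (facesDelta K b I) v₀) F) : IsFacetOf (facesDelta K b I) F := by
  refine ⟨hF.1.1, fun G hG hFG => ?_⟩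
  by_cases hv₀G : v₀ ∈ G
  · exfalso
    obtain ⟨j, hjG⟩ := exists_notMem_of_mem_facesDelta hmin hG
    have hne : (⟨v₀.1, j⟩ : PolVars m b) ≠ v₀ := fun h => hjG (by rwa [h])
    have hv₀F : v₀ ∉ insert ⟨v₀.1, j⟩ F := fun h =>
      (Finset.mem_insert.mp h).elim (fun h' => hne h'.symm) hF.1.2
    have hjF : ⟨v₀.1, j⟩ ∈ F := hF.mem_of_insert_mem
      ⟨insert_mem_facesDelta hF.1.1 hv₀ rfl hv₀F, hv₀F⟩
    exact hjG (hFG hjF)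
  · exact hF.2 G ⟨hG, hv₀G⟩ hFG

end RowOfPolarization

theorem statement11_general {K : Type} [Field K] {n : ℕ} (b : Fin n → ℕ)
    (I : Ideal (MvPolynomial (Fin n) K)) (hI : ZeroDimData K b I)
    (v₀ : PolVars n b) (hv₀₂ : (v₀.2 : ℕ) = 0) :
    ∀ F : Finset (PolVars n b),
      IsFacetOf (delC (facesDelta K b I) v₀) F ↔
        (IsFacetOf (facesDelta K b I) F ∧ v₀ ∉ F) := by
  obtain ⟨-, -, hpow⟩ := hI
  have hmin := single_mem_minGens (hpow v₀.1).2.1 (hpow v₀.1).2.2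
  exact fun F => ⟨fun hF => ⟨isFacetOf_of_isFacetOf_delC hv₀₂ hmin hF, hF.1.2⟩,
    fun hF => hF.1.delC hF.2⟩

/-- Assume `b_n > 1`.  Then the facets of `del_{Δ(I)}(x_{n,1})` are
exactly the facets of `Δ(I)` not containing `x_{n,1}`; in particular every facet of
`del_{Δ(I)}(x_{n,1})` is a facet of `Δ(I)`, i.e. `x_{n,1}` is a shedding vertex of `Δ(I)`. -/
theorem statement11 {K : Type} [Field K] {n : ℕ} (b : Fin n → ℕ)
    (I : Ideal (MvPolynomial (Fin n) K)) (hI : ZeroDimData K b I)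
    (i₀ : Fin n) (hi₀ : (i₀ : ℕ) = n - 1) (hbn : 1 < b i₀)
    (v₀ : PolVars n b) (hv₀₁ : v₀.1 = i₀) (hv₀₂ : (v₀.2 : ℕ) = 0) :
    ∀ F : Finset (PolVars n b),
      IsFacetOf (delC (facesDelta K b I) v₀) F ↔
        (IsFacetOf (facesDelta K b I) F ∧ v₀ ∉ F) :=
  statement11_general b I hI v₀ hv₀₂

end
end
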